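/- Let p be a real number with 0 ≤ p < 1/2. Define P(N) = ∑_{j=⌊N/2⌋+1}^{N} C(N,j) p^j (1-p)^{N-j} for odd N. Then P is strictly decreasing along odd N (P(N+2) < P(N) for 0 < p < 1/2) and lim_{N→∞, N odd} P(N) = 0. -/

import Mathlib

open Finset Filter

/-!
Adding two voters to a committee of `2k+1` changes the majority verdict only when the first
`2k+1` votes split `k : k+1`: the verdict turns wrong if both newcomers err (probability `p²`) and
turns right if neither does (probability `(1-p)²`). Hence
`P(2k+3) = P(2k+1) - C(2k+1,k) (p(1-p))^(k+1) (1-2p)`, which is strictly decreasing for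
`0 < p < 1/2`. For the limit, each of the at most `2^(2k+1)` wrong-majority outcomes has
probability at most `p^(k+1) (1-p)^k`, so `P(2k+1) ≤ 2p (4p(1-p))^k → 0`.
-/

def binomTerm (p : ℝ) (n j : ℕ) : ℝ := (n.choose j : ℝ) * p ^ j * (1 - p) ^ (n - j)

/-- `binomTail p n r = ℙ[Bin(n, p) ≥ r]`; the majority error of `2k+1` voters is
`binomTail p (2k+1) (k+1)`. -/
def binomTail (p : ℝ) (n r : ℕ) : ℝ := ∑ j ∈ Icc r n, binomTerm p n j

lemma binomTerm_nonneg {p : ℝ} (hp0 : 0 ≤ p) (hp1 : p ≤ 1) (n j : ℕ) :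
    0 ≤ binomTerm p n j := by
  have : 0 ≤ 1 - p := by linarith
  unfold binomTerm
  positivity

lemma binomTerm_of_lt (p : ℝ) {n j : ℕ} (h : n < j) : binomTerm p n j = 0 := by
  simp [binomTerm, Nat.choose_eq_zero_of_lt h]

lemma binomTerm_succ_succ (p : ℝ) (n j : ℕ) :
    binomTerm p (n + 1) (j + 1) = p * binomTerm p n j + (1 - p) * binomTerm p n (j + 1) := by
  rcases lt_or_ge j n with hjn | hnj
  · rw [binomTerm, binomTerm, binomTerm, Nat.choose_succ_succ', Nat.cast_add,
      Nat.add_sub_add_right, show n - j = n - (j + 1) + 1 by omega]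
    ring
  · have hn : n < j + 1 := Nat.lt_succ_of_le hnj
    rw [binomTerm_of_lt p hn, binomTerm, binomTerm, Nat.choose_succ_succ',
      Nat.choose_eq_zero_of_lt hn, add_zero, Nat.add_sub_add_right]
    ring

lemma binomTail_nonneg {p : ℝ} (hp0 : 0 ≤ p) (hp1 : p ≤ 1) (n r : ℕ) :
    0 ≤ binomTail p n r :=
  sum_nonneg fun j _ => binomTerm_nonneg hp0 hp1 n j

lemma binomTail_eq_add (p : ℝ) {n r : ℕ} (h : r ≤ n) :
    binomTail p n r = binomTerm p n r + binomTail p n (r + 1) := by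
  rw [binomTail, binomTail, Icc_eq_cons_Ioc h, sum_cons, Icc_add_one_left_eq_Ioc]

lemma sum_Icc_binomTerm_succ (p : ℝ) (m n r : ℕ) :
    ∑ j ∈ Icc r n, binomTerm p m (j + 1) = ∑ j ∈ Icc (r + 1) (n + 1), binomTerm p m j := by
  rw [← map_add_right_Icc, sum_map]
  rfl

lemma binomTail_succ_succ (p : ℝ) (n r : ℕ) :
    binomTail p (n + 1) (r + 1) = p * binomTail p n r + (1 - p) * binomTail p n (r + 1) := by
  have htop : ∑ j ∈ Icc (r + 1) (n + 1), binomTerm p n j = binomTail p n (r + 1) :=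
    (sum_subset (Icc_subset_Icc_right n.le_succ) fun j hj hjn =>
      binomTerm_of_lt p (by simp only [mem_Icc] at hj hjn; omega)).symm
  rw [binomTail, ← sum_Icc_binomTerm_succ]
  simp only [binomTerm_succ_succ, sum_add_distrib, ← mul_sum, sum_Icc_binomTerm_succ, htop]
  rfl

lemma binomTail_two_mul_add_three (p : ℝ) (k : ℕ) :
    binomTail p (2 * k + 1 + 2) (k + 2) =
      binomTail p (2 * k + 1) (k + 1) -
        (2 * k + 1).choose k * (p * (1 - p)) ^ (k + 1) * (1 - 2 * p) := by
  have h₃ := binomTail_succ_succ p (2 * k + 1 + 1) (k + 1)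
  have h₂ := binomTail_succ_succ p (2 * k + 1) k
  have h₂' := binomTail_succ_succ p (2 * k + 1) (k + 1)
  have hk := binomTail_eq_add p (show k ≤ 2 * k + 1 by omega)
  have hk₁ := binomTail_eq_add p (show k + 1 ≤ 2 * k + 1 by omega)
  rw [binomTerm, show 2 * k + 1 - k = k + 1 by omega] at hk
  rw [binomTerm, Nat.choose_symm_half, show 2 * k + 1 - (k + 1) = k by omega] at hk₁
  rw [mul_pow]
  linear_combination h₃ + p * h₂ + (1 - p) * h₂' + p ^ 2 * hk - (1 - p) ^ 2 * hk₁

lemma pow_mul_pow_sub_le_pow_mul_pow_sub {R : Type*} [CommSemiring R] [PartialOrder R]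
    [IsOrderedRing R] {a b : R} (ha : 0 ≤ a) (hab : a ≤ b) {m j n : ℕ} (hmj : m ≤ j)
    (hjn : j ≤ n) : a ^ j * b ^ (n - j) ≤ a ^ m * b ^ (n - m) := by
  obtain ⟨d, rfl⟩ := Nat.exists_eq_add_of_le hmj
  calc a ^ (m + d) * b ^ (n - (m + d)) = a ^ m * (a ^ d * b ^ (n - (m + d))) := by ring
    _ ≤ a ^ m * (b ^ d * b ^ (n - (m + d))) :=
      mul_le_mul_of_nonneg_left
        (mul_le_mul_of_nonneg_right (pow_le_pow_left₀ ha hab d) (pow_nonneg (ha.trans hab) _))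
        (pow_nonneg ha _)
    _ = a ^ m * b ^ (n - m) := by rw [← pow_add, show d + (n - (m + d)) = n - m by omega]

lemma binomTail_le {p : ℝ} (hp0 : 0 ≤ p) (hp : p ≤ 1 - p) (n r : ℕ) :
    binomTail p n r ≤ 2 ^ n * (p ^ r * (1 - p) ^ (n - r)) := by
  have hchoose : ∑ j ∈ Icc r n, (n.choose j : ℝ) ≤ 2 ^ n := by
    rw [← Nat.cast_ofNat, ← Nat.cast_pow, ← Nat.sum_range_choose, ← Nat.cast_sum]
    exact_mod_cast sum_le_sum_of_subset fun j hj => by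
      simp only [mem_Icc, mem_range] at hj ⊢
      omega
  calc binomTail p n r = ∑ j ∈ Icc r n, (n.choose j : ℝ) * (p ^ j * (1 - p) ^ (n - j)) := by
        simp only [binomTail, binomTerm, mul_assoc]
    _ ≤ ∑ j ∈ Icc r n, (n.choose j : ℝ) * (p ^ r * (1 - p) ^ (n - r)) := by
        refine sum_le_sum fun j hj => ?_
        rw [mem_Icc] at hj
        exact mul_le_mul_of_nonneg_left (pow_mul_pow_sub_le_pow_mul_pow_sub hp0 hp hj.1 hj.2)
          (Nat.cast_nonneg _)
    _ ≤ 2 ^ n * (p ^ r * (1 - p) ^ (n - r)) := by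
        rw [← sum_mul]
        exact mul_le_mul_of_nonneg_right hchoose
          (mul_nonneg (pow_nonneg hp0 _) (pow_nonneg (hp0.trans hp) _))

theorem tendsto_binomTail_two_mul_add_one {p : ℝ} (hp0 : 0 ≤ p) (hp : p < 1 / 2) :
    Tendsto (fun k => binomTail p (2 * k + 1) (k + 1)) atTop (nhds 0) := by
  have hq : p ≤ 1 - p := by linarith
  have hr0 : 0 ≤ 4 * p * (1 - p) := by nlinarith
  have hr1 : 4 * p * (1 - p) < 1 := by nlinarith [sq_nonneg (1 - 2 * p)]
  refine squeeze_zero (fun k => binomTail_nonneg hp0 (by linarith) _ _)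
    (fun k => (binomTail_le hp0 hq _ _).trans_eq ?_)
    (by simpa using (tendsto_pow_atTop_nhds_zero_of_lt_one hr0 hr1).const_mul (2 * p))
  have h4 : (4 : ℝ) ^ k = 2 ^ (2 * k) := by rw [pow_mul]; norm_num
  rw [show 2 * k + 1 - (k + 1) = k by omega, mul_pow, mul_pow, h4]
  ring

/-- For `0 ≤ p < 1/2`, the majority-rule error probability
`P(N) = ∑_{j=⌊N/2⌋+1}^N C(N,j) p^j (1-p)^{N-j}` is strictly decreasing along odd `N`
(when `0 < p`) and tends to 0 over odd `N`. -/
theorem majority_error_anti_and_tendsto_zero (p : ℝ) (hp0 : 0 ≤ p) (hp : p < 1 / 2) :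
    (∀ N : ℕ, Odd N → 0 < p →
      ∑ j ∈ Finset.Icc ((N + 2) / 2 + 1) (N + 2),
          ((N + 2).choose j : ℝ) * p ^ j * (1 - p) ^ (N + 2 - j)
        < ∑ j ∈ Finset.Icc (N / 2 + 1) N, (N.choose j : ℝ) * p ^ j * (1 - p) ^ (N - j)) ∧
    Tendsto (fun k : ℕ =>
        ∑ j ∈ Finset.Icc ((2 * k + 1) / 2 + 1) (2 * k + 1),
          ((2 * k + 1).choose j : ℝ) * p ^ j * (1 - p) ^ (2 * k + 1 - j))
      atTop (nhds 0) := by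
  have hhalf : ∀ k, (2 * k + 1) / 2 + 1 = k + 1 := by omega
  refine ⟨?_, by simp only [hhalf]; exact tendsto_binomTail_two_mul_add_one hp0 hp⟩
  rintro N ⟨k, rfl⟩ hp_pos
  rw [show (2 * k + 1 + 2) / 2 + 1 = k + 2 by omega, hhalf]
  change binomTail p (2 * k + 1 + 2) (k + 2) < binomTail p (2 * k + 1) (k + 1)
  have hgap : 0 < ((2 * k + 1).choose k : ℝ) * (p * (1 - p)) ^ (k + 1) * (1 - 2 * p) := by
    have : 0 < 1 - p := by linarith
    have : 0 < 1 - 2 * p := by linarith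
    have := Nat.choose_pos (show k ≤ 2 * k + 1 by omega)
    positivity
  linarith [binomTail_two_mul_add_three p k]
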